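/- For every z ∈ ℂ, with y = e^{2πiz}, the function E₄(it)·φ_{0,1}(it, z)·φ_{−2,1}(it, z)² tends to y⁻³ + 6y⁻² − 33y⁻¹ + 52 − 33y + 6y² + y³ as the real parameter t tends to +∞. -/

import Mathlib

/-! Along `τ = i t` each factor is, up to an explicit exponential, a series `∑ aₙ e^{-cₙ t}` with
`cₙ ≥ 0`, so by dominated convergence it tends to the sum of the `aₙ` with `cₙ = 0`: `E₄ → 1`,
`θ₃, θ₄ → 1` and `e^{π t / 4} θ₂(i t, z) → e^{π i z} + e^{-π i z} = 2 cos π z`; moreover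
`e^{π t / 12} η(i t) = ∏ (1 - qⁿ) → 1` by continuity of the product at `q = 0`.
Since `θ₁(τ, z) = -θ₂(τ, z + 1/2)`, these exponentials cancel in `φ_{0,1}` and `φ_{-2,1}`, which
therefore tend to `4 (cos² π z + 2)` and `-4 sin² π z`; finally `64 (cos² π z + 2) sin⁴ π z` is the
stated Laurent polynomial in `y = e^{2 π i z}`. -/

open Complex Filter Topology

/-- The Jacobi theta function θ₁. -/
noncomputable def theta1 (τ z : ℂ) : ℂ :=
  -Complex.I * ∑' n : ℤ, (-1 : ℂ) ^ n *
    Complex.exp (Real.pi * Complex.I * ((n : ℂ) + 1 / 2) ^ 2 * τ) *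
    Complex.exp (2 * Real.pi * Complex.I * ((n : ℂ) + 1 / 2) * z)

/-- The Jacobi theta function θ₂. -/
noncomputable def theta2 (τ z : ℂ) : ℂ :=
  ∑' n : ℤ, Complex.exp (Real.pi * Complex.I * ((n : ℂ) + 1 / 2) ^ 2 * τ) *
    Complex.exp (2 * Real.pi * Complex.I * ((n : ℂ) + 1 / 2) * z)

/-- The Jacobi theta function θ₃. -/
noncomputable def theta3 (τ z : ℂ) : ℂ :=
  ∑' n : ℤ, Complex.exp (Real.pi * Complex.I * (n : ℂ) ^ 2 * τ) *
    Complex.exp (2 * Real.pi * Complex.I * (n : ℂ) * z)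

/-- The Jacobi theta function θ₄. -/
noncomputable def theta4 (τ z : ℂ) : ℂ :=
  ∑' n : ℤ, (-1 : ℂ) ^ n * Complex.exp (Real.pi * Complex.I * (n : ℂ) ^ 2 * τ) *
    Complex.exp (2 * Real.pi * Complex.I * (n : ℂ) * z)

/-- The Dedekind eta function. -/
noncomputable def dedekindEta (τ : ℂ) : ℂ :=
  Complex.exp (Real.pi * Complex.I * τ / 12) *
    ∏' n : ℕ, (1 - Complex.exp (2 * Real.pi * Complex.I * ((n : ℂ) + 1) * τ))

/-- The weak Jacobi form φ_{0,1}. -/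
noncomputable def phi01 (τ z : ℂ) : ℂ :=
  4 * ((theta2 τ z / theta2 τ 0) ^ 2 + (theta3 τ z / theta3 τ 0) ^ 2 +
    (theta4 τ z / theta4 τ 0) ^ 2)

/-- The weak Jacobi form φ_{-2,1}. -/
noncomputable def phim21 (τ z : ℂ) : ℂ := -theta1 τ z ^ 2 / dedekindEta τ ^ 6

/-- The normalized Eisenstein series E₄. -/
noncomputable def E4 (τ : ℂ) : ℂ :=
  1 + 240 * ∑' n : ℕ, (∑ d ∈ (n + 1).divisors, (d : ℂ) ^ 3) *
    Complex.exp (2 * Real.pi * Complex.I * ((n : ℂ) + 1) * τ)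

/-- The normalized Eisenstein series E₆. -/
noncomputable def E6 (τ : ℂ) : ℂ :=
  1 - 504 * ∑' n : ℕ, (∑ d ∈ (n + 1).divisors, (d : ℂ) ^ 5) *
    Complex.exp (2 * Real.pi * Complex.I * ((n : ℂ) + 1) * τ)

/-- `IsWeakJacobiForm k M φ` means that `φ : ℂ → ℂ → ℂ` (viewed as a function of
`(τ, z)` on the domain `{τ : 0 < Im τ} × ℂ`) is a weak Jacobi form of weight `k`
and index `M / 2` (so `M` is twice the index, which is allowed to be half-integral):
it is holomorphic, satisfies the modular and elliptic transformation laws, and has a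
Fourier expansion `∑_{n ≥ 0} ∑_{r ∈ ℤ + M/2} c n r q^n y^r` with only
nonnegative powers of `q`. -/
def IsWeakJacobiForm (k M : ℤ) (φ : ℂ → ℂ → ℂ) : Prop :=
  DifferentiableOn ℂ (fun p : ℂ × ℂ => φ p.1 p.2) {p : ℂ × ℂ | 0 < p.1.im} ∧
  (∀ γ : Matrix.SpecialLinearGroup (Fin 2) ℤ, ∀ τ z : ℂ, 0 < τ.im →
    φ ((γ 0 0 * τ + γ 0 1) / (γ 1 0 * τ + γ 1 1)) (z / (γ 1 0 * τ + γ 1 1)) =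
      (γ 1 0 * τ + γ 1 1) ^ k *
        Complex.exp (Real.pi * Complex.I * M * (γ 1 0) * z ^ 2 / (γ 1 0 * τ + γ 1 1)) *
        φ τ z) ∧
  (∀ l μ : ℤ, ∀ τ z : ℂ, 0 < τ.im →
    φ τ (z + l * τ + μ) =
      (-1 : ℂ) ^ (M * (l + μ)) *
        Complex.exp (-(Real.pi * Complex.I * M) * ((l : ℂ) ^ 2 * τ + 2 * l * z)) * φ τ z) ∧
  (∃ c : ℕ → ℤ → ℂ, ∀ τ z : ℂ, 0 < τ.im →
    HasSum (fun p : ℕ × ℤ => c p.1 p.2 * Complex.exp (2 * Real.pi * Complex.I * (p.1 : ℂ) * τ) *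
      Complex.exp (Real.pi * Complex.I * (2 * (p.2 : ℂ) + M) * z)) (φ τ z))

/-- `IsModularForm k f` means that `f : ℂ → ℂ` (viewed as a function on the upper half
plane `{τ : 0 < Im τ}`) is a modular form of weight `k` for `SL₂(ℤ)`: it is holomorphic,
satisfies the modular transformation law, and is bounded as `Im τ → ∞`. -/
def IsModularForm (k : ℤ) (f : ℂ → ℂ) : Prop :=
  DifferentiableOn ℂ f {τ : ℂ | 0 < τ.im} ∧
  (∀ γ : Matrix.SpecialLinearGroup (Fin 2) ℤ, ∀ τ : ℂ, 0 < τ.im →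
    f ((γ 0 0 * τ + γ 0 1) / (γ 1 0 * τ + γ 1 1)) = (γ 1 0 * τ + γ 1 1) ^ k * f τ) ∧
  (∃ A C : ℝ, ∀ τ : ℂ, C ≤ τ.im → ‖f τ‖ ≤ A)


open scoped Real

theorem tendsto_tsum_exp_neg_mul_smul_atTop {ι E : Type*} [NormedAddCommGroup E]
    [NormedSpace ℝ E] [CompleteSpace E] {a : ι → E} {c : ι → ℝ} {s : Finset ι}
    (hs : ∀ i ∈ s, c i = 0) (hc : ∀ i ∉ s, 0 < c i)
    (hsum : Summable fun i => rexp (-c i) * ‖a i‖) :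
    Tendsto (fun t : ℝ => ∑' i, rexp (-(c i * t)) • a i) atTop (𝓝 (∑ i ∈ s, a i)) := by
  rw [sum_eq_tsum_indicator]
  refine tendsto_tsum_of_dominated_convergence hsum (fun i => ?_) ?_
  · by_cases hi : i ∈ s
    · simp [hi, hs i hi]
    · rw [Set.indicator_of_notMem (by simpa using hi), ← zero_smul ℝ (a i)]
      refine Tendsto.smul_const ?_ _
      exact Real.tendsto_exp_atBot.comp
        (tendsto_neg_atTop_atBot.comp (tendsto_id.const_mul_atTop (hc i hi)))
  · filter_upwards [eventually_ge_atTop 1] with t ht i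
    rw [norm_smul, Real.norm_of_nonneg (Real.exp_nonneg _)]
    gcongr
    by_cases hi : i ∈ s
    · simp [hs i hi]
    · nlinarith [hc i hi]

theorem theta4_eq_theta3_add_half (τ z : ℂ) : theta4 τ z = theta3 τ (z + 1 / 2) := by
  refine tsum_congr fun n => ?_
  have h : cexp (2 * π * I * n * (z + 1 / 2)) = (-1) ^ n * cexp (2 * π * I * n * z) := by
    rw [← exp_pi_mul_I, ← exp_int_mul, ← Complex.exp_add]
    ring_nf
  rw [h]
  ring

theorem theta1_eq_neg_theta2_add_half (τ z : ℂ) : theta1 τ z = -theta2 τ (z + 1 / 2) := by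
  have h : theta2 τ (z + 1 / 2) = I * ∑' n : ℤ, (-1 : ℂ) ^ n *
      cexp (π * I * ((n : ℂ) + 1 / 2) ^ 2 * τ) * cexp (2 * π * I * ((n : ℂ) + 1 / 2) * z) := by
    rw [theta2, ← tsum_mul_left]
    refine tsum_congr fun n => ?_
    have h : cexp (2 * π * I * ((n : ℂ) + 1 / 2) * (z + 1 / 2)) =
        I * (-1) ^ n * cexp (2 * π * I * ((n : ℂ) + 1 / 2) * z) := by
      rw [show 2 * π * I * ((n : ℂ) + 1 / 2) * (z + 1 / 2) =
          π / 2 * I + n * (π * I) + 2 * π * I * ((n : ℂ) + 1 / 2) * z by ring,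
        Complex.exp_add, Complex.exp_add, exp_int_mul, exp_pi_mul_I, exp_pi_div_two_mul_I]
    rw [h]
    ring
  rw [theta1, h, neg_mul]

theorem tendsto_theta3_mul_I (z : ℂ) :
    Tendsto (fun t : ℝ => theta3 (t * I) z) atTop (𝓝 1) := by
  have hterm (t : ℝ) (n : ℤ) : cexp (π * I * (n : ℂ) ^ 2 * (t * I)) * cexp (2 * π * I * n * z) =
      rexp (-(π * n ^ 2 * t)) • cexp (2 * π * I * n * z) := by
    rw [Complex.real_smul, Complex.ofReal_exp]
    congr 2
    push_cast
    linear_combination (π * n ^ 2 * t : ℂ) * I_mul_I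
  have hsum : Summable fun n : ℤ => rexp (-(π * n ^ 2)) * ‖cexp (2 * π * I * n * z)‖ := by
    refine ((summable_jacobiTheta₂_term_iff z I).mpr (by simp)).norm.congr fun n => ?_
    rw [norm_jacobiTheta₂_term, Complex.norm_exp, ← Real.exp_add]
    congr 1
    simp
    ring
  have hpos (n : ℤ) (hn : n ∉ ({0} : Finset ℤ)) : 0 < π * (n ^ 2 : ℝ) := by
    have : n ≠ 0 := by simpa using hn
    positivity
  have := tendsto_tsum_exp_neg_mul_smul_atTop (s := {0}) (c := fun n : ℤ => π * n ^ 2)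
    (by simp) hpos hsum
  simpa [theta3, hterm] using this

theorem tendsto_theta4_mul_I (z : ℂ) :
    Tendsto (fun t : ℝ => theta4 (t * I) z) atTop (𝓝 1) := by
  simpa only [theta4_eq_theta3_add_half] using tendsto_theta3_mul_I (z + 1 / 2)

theorem tendsto_exp_mul_theta2_mul_I (z : ℂ) :
    Tendsto (fun t : ℝ => cexp (π * t / 4) * theta2 (t * I) z) atTop
      (𝓝 (2 * Complex.cos (π * z))) := by
  have hterm (t : ℝ) (n : ℤ) : cexp (π * t / 4) * (cexp (π * I * ((n : ℂ) + 1 / 2) ^ 2 * (t * I)) *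
      cexp (2 * π * I * ((n : ℂ) + 1 / 2) * z)) =
      rexp (-(π * (n * (n + 1)) * t)) • cexp (2 * π * I * ((n : ℂ) + 1 / 2) * z) := by
    rw [Complex.real_smul, Complex.ofReal_exp, ← mul_assoc, ← Complex.exp_add]
    congr 2
    push_cast
    linear_combination (π * ((n : ℂ) + 1 / 2) ^ 2 * t) * I_mul_I
  have hsum : Summable fun n : ℤ =>
      rexp (-(π * (n * (n + 1)))) * ‖cexp (2 * π * I * ((n : ℂ) + 1 / 2) * z)‖ := by
    refine (((summable_jacobiTheta₂_term_iff (z + I / 2) I).mpr (by simp)).norm.mul_left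
      ‖cexp (π * I * z)‖).congr fun n => ?_
    rw [norm_jacobiTheta₂_term, Complex.norm_exp, Complex.norm_exp, ← Real.exp_add,
      ← Real.exp_add]
    congr 1
    simp
    ring
  have hpos (n : ℤ) (hn : n ∉ ({0, -1} : Finset ℤ)) : 0 < π * (n * (n + 1) : ℝ) := by
    simp only [Finset.mem_insert, Finset.mem_singleton, not_or] at hn
    have : 0 < n * (n + 1) := by
      rcases lt_or_gt_of_ne hn.1 with h | h
      · nlinarith [show n + 1 < 0 by omega]
      · positivity
    exact mul_pos Real.pi_pos (by exact_mod_cast this)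
  have := tendsto_tsum_exp_neg_mul_smul_atTop (s := {0, -1})
    (c := fun n : ℤ => π * (n * (n + 1))) (by simp) hpos hsum
  simp only [theta2, ← tsum_mul_left, hterm]
  convert this using 2
  rw [Finset.sum_pair (by decide), Complex.cos, mul_div_cancel₀ _ two_ne_zero]
  push_cast
  ring_nf

theorem tendsto_tprod_one_sub_exp_mul_I :
    Tendsto (fun t : ℝ => ∏' n : ℕ, (1 - cexp (2 * π * I * ((n : ℂ) + 1) * (t * I)))) atTop
      (𝓝 1) := by
  have hq : Tendsto (fun t : ℝ => cexp (2 * π * I * (t * I))) atTop (𝓝 0) := by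
    rw [tendsto_zero_iff_norm_tendsto_zero]
    simpa [Complex.norm_exp] using tendsto_id.const_mul_atTop (by positivity : 0 < 2 * π)
  have hcont : ContinuousAt (fun q : ℂ => ∏' n : ℕ, (1 - q ^ (n + 1))) 0 :=
    (ModularForm.differentiableOn_tprod_one_sub_pow.differentiableAt
      (Metric.isOpen_ball.mem_nhds (by simp))).continuousAt
  have := hcont.tendsto.comp hq
  simp only [zero_pow (Nat.succ_ne_zero _), sub_zero, tprod_one] at this
  refine this.congr fun t => ?_
  simp only [Function.comp_apply, ← ModularForm.eta_q_eq_pow, ModularForm.eta_q_eq_cexp]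

theorem tendsto_exp_mul_dedekindEta_mul_I :
    Tendsto (fun t : ℝ => cexp (π * t / 12) * dedekindEta (t * I)) atTop (𝓝 1) := by
  refine tendsto_tprod_one_sub_exp_mul_I.congr fun t => ?_
  rw [dedekindEta, ← mul_assoc, ← Complex.exp_add,
    show (π * t / 12 + π * I * (t * I) / 12 : ℂ) = 0 by
      linear_combination (π * t / 12 : ℂ) * I_mul_I,
    Complex.exp_zero, one_mul]

open ArithmeticFunction ArithmeticFunction.sigma in
theorem tendsto_E4_mul_I : Tendsto (fun t : ℝ => E4 (t * I)) atTop (𝓝 1) := by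
  have hterm (t : ℝ) (n : ℕ) : (∑ d ∈ (n + 1).divisors, (d : ℂ) ^ 3) *
      cexp (2 * π * I * ((n : ℂ) + 1) * (t * I)) =
      rexp (-(2 * π * (n + 1) * t)) • (σ 3 (n + 1) : ℂ) := by
    rw [Complex.real_smul, Complex.ofReal_exp, mul_comm, sigma_apply]
    push_cast
    congr 2
    linear_combination (2 * π * ((n : ℂ) + 1) * t) * I_mul_I
  have hsum : Summable fun n : ℕ => rexp (-(2 * π * (n + 1))) * ‖(σ 3 (n + 1) : ℂ)‖ := by
    refine ((summable_nat_add_iff 1).mpr (EisensteinSeries.summable_sigma_mul_cexp_pow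
      (k := 4) (by norm_num) UpperHalfPlane.I)).norm.congr fun n => ?_
    rw [norm_mul, norm_pow, Complex.norm_exp, ← Real.exp_nat_mul, mul_comm]
    congr 2
    simp
    ring
  have := tendsto_tsum_exp_neg_mul_smul_atTop (s := ∅) (c := fun n : ℕ => 2 * π * (n + 1))
    (by simp) (fun n _ => by positivity) hsum
  simpa [E4, hterm] using (this.const_mul 240).const_add 1

theorem four_mul_cos_sq_add_two_mul_sixteen_sin_pow_four (z : ℂ) :
    4 * (Complex.cos (π * z) ^ 2 + 2) * (16 * Complex.sin (π * z) ^ 4) =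
      (cexp (2 * π * I * z))⁻¹ ^ 3 + 6 * (cexp (2 * π * I * z))⁻¹ ^ 2 -
        33 * (cexp (2 * π * I * z))⁻¹ + 52 - 33 * cexp (2 * π * I * z) +
        6 * cexp (2 * π * I * z) ^ 2 + cexp (2 * π * I * z) ^ 3 := by
  have hy : cexp (2 * π * I * z) = cexp (π * z * I) ^ 2 := by
    rw [← Complex.exp_nat_mul]; ring_nf
  have hneg : cexp (-(π * z) * I) = (cexp (π * z * I))⁻¹ := by
    rw [← Complex.exp_neg]; ring_nf
  have hw : cexp (π * z * I) ≠ 0 := Complex.exp_ne_zero _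
  rw [show Complex.sin (π * z) ^ 4 = (1 - Complex.cos (π * z) ^ 2) ^ 2 by
    rw [← Complex.sin_sq]; ring, Complex.cos, hy, hneg]
  field_simp
  ring

theorem tendsto_phi01_mul_I (z : ℂ) :
    Tendsto (fun t : ℝ => phi01 (t * I) z) atTop (𝓝 (4 * (Complex.cos (π * z) ^ 2 + 2))) := by
  have h := (((((tendsto_exp_mul_theta2_mul_I z).div (tendsto_exp_mul_theta2_mul_I 0)
    (by simp)).pow 2).add (((tendsto_theta3_mul_I z).div (tendsto_theta3_mul_I 0)
    one_ne_zero).pow 2)).add (((tendsto_theta4_mul_I z).div (tendsto_theta4_mul_I 0)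
    one_ne_zero).pow 2)).const_mul 4
  convert h using 2 with t
  · simp only [phi01, Pi.div_apply, mul_div_mul_left _ _ (Complex.exp_ne_zero _)]
  · simp
    ring

theorem tendsto_phim21_mul_I (z : ℂ) :
    Tendsto (fun t : ℝ => phim21 (t * I) z) atTop (𝓝 (-4 * Complex.sin (π * z) ^ 2)) := by
  have h := ((tendsto_exp_mul_theta2_mul_I (z + 1 / 2)).pow 2).neg.div
    (tendsto_exp_mul_dedekindEta_mul_I.pow 6) (by simp)
  convert h using 2 with t
  · have : cexp (π * t / 4) ^ 2 = cexp (π * t / 12) ^ 6 := by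
      simp only [← Complex.exp_nat_mul]
      ring_nf
    rw [phim21, theta1_eq_neg_theta2_add_half, Pi.div_apply, mul_pow, mul_pow, this, neg_sq,
      neg_mul_eq_mul_neg, mul_div_mul_left _ _ (pow_ne_zero _ (Complex.exp_ne_zero _))]
  · rw [show (π : ℂ) * (z + 1 / 2) = π * z + π / 2 by ring, Complex.cos_add_pi_div_two]
    ring

/-- The q⁰-coefficient of E₄·φ_{0,1}·φ_{-2,1}² is
y⁻³ + 6y⁻² - 33y⁻¹ + 52 - 33y + 6y² + y³. -/
theorem E4_phi01_phim21_sq_q0_coefficient (z : ℂ) :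
    Filter.Tendsto
      (fun t : ℝ => E4 ((t : ℂ) * Complex.I) * phi01 ((t : ℂ) * Complex.I) z *
        phim21 ((t : ℂ) * Complex.I) z ^ 2) Filter.atTop
      (nhds ((Complex.exp (2 * Real.pi * Complex.I * z))⁻¹ ^ 3 +
        6 * (Complex.exp (2 * Real.pi * Complex.I * z))⁻¹ ^ 2 -
        33 * (Complex.exp (2 * Real.pi * Complex.I * z))⁻¹ + 52 -
        33 * Complex.exp (2 * Real.pi * Complex.I * z) +
        6 * Complex.exp (2 * Real.pi * Complex.I * z) ^ 2 +
        Complex.exp (2 * Real.pi * Complex.I * z) ^ 3)) := by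
  rw [← four_mul_cos_sq_add_two_mul_sixteen_sin_pow_four]
  convert (tendsto_E4_mul_I.mul (tendsto_phi01_mul_I z)).mul ((tendsto_phim21_mul_I z).pow 2)
    using 2
  ring
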